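/- The projection map (x,y,z) ↦ (x,y) maps the blown-up curve S̃_ε = {(x,y,z) : (z/ε)² + (x-½)² = ¼ and εy = zx} bijectively onto the cuspidal curve S = {(x,y) : y² = x³ - x⁴}, with inverse given by (x,y) ↦ (x, y, εy/x) for x ≠ 0 and (0,0) ↦ (0,0,0). -/

import Mathlib

/-!
Away from `x = 0` the equation `ε y = z x` determines `z = ε y / x`, and substituting it into the
circle `z² = ε² (x - x²)` gives exactly the cusp equation `y² = x³ - x⁴`. Over `x = 0` both curves
have the single point at the origin, so the projection and `(x, y) ↦ (x, y, ε y / x)` are mutually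
inverse.
-/

open Set

def blowup (ε : ℝ) : Set (ℝ × ℝ × ℝ) :=
  {p | (p.2.2 / ε) ^ 2 + (p.1 - 1 / 2) ^ 2 = 1 / 4 ∧ ε * p.2.1 = p.2.2 * p.1}

def cusp : Set (ℝ × ℝ) := {q | q.2 ^ 2 = q.1 ^ 3 - q.1 ^ 4}

noncomputable def liftToBlowup (ε : ℝ) (q : ℝ × ℝ) : ℝ × ℝ × ℝ :=
  if q.1 = 0 then (0, 0, 0) else (q.1, q.2, ε * q.2 / q.1)

section

variable {ε x y z : ℝ}

theorem div_sq_add_sub_half_sq_eq_quarter_iff (hε : ε ≠ 0) :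
    (z / ε) ^ 2 + (x - 1 / 2) ^ 2 = 1 / 4 ↔ z ^ 2 = ε ^ 2 * (x - x ^ 2) := by
  have hcircle : (z / ε) ^ 2 + (x - 1 / 2) ^ 2 - 1 / 4 = (z ^ 2 - ε ^ 2 * (x - x ^ 2)) / ε ^ 2 := by
    field_simp
    ring
  rw [← sub_eq_zero, hcircle, div_eq_zero_iff, sub_eq_zero]
  simp [hε]

theorem snd_eq_zero_of_mem_cusp {q : ℝ × ℝ} (hq : q ∈ cusp) (h0 : q.1 = 0) : q.2 = 0 := by
  simp only [cusp, mem_ofPred_eq, h0] at hq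
  exact pow_eq_zero_iff two_ne_zero |>.mp (by simpa using hq)

theorem eq_zero_of_mem_blowup (hε : ε ≠ 0) (hp : (0, y, z) ∈ blowup ε) : y = 0 ∧ z = 0 := by
  obtain ⟨hcircle, hline⟩ := hp
  rw [div_sq_add_sub_half_sq_eq_quarter_iff hε] at hcircle
  have hz : z = 0 := pow_eq_zero_iff two_ne_zero |>.mp (by simpa using hcircle)
  refine ⟨?_, hz⟩
  simpa [hε] using hline

theorem mapsTo_blowup_cusp (hε : ε ≠ 0) :
    MapsTo (fun p : ℝ × ℝ × ℝ => (p.1, p.2.1)) (blowup ε) cusp := by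
  rintro ⟨x, y, z⟩ ⟨hcircle, hline⟩
  rw [div_sq_add_sub_half_sq_eq_quarter_iff hε] at hcircle
  have hsq : ε ^ 2 * y ^ 2 = ε ^ 2 * (x ^ 3 - x ^ 4) := by
    linear_combination (ε * y + z * x) * hline + x ^ 2 * hcircle
  exact mul_left_cancel₀ (pow_ne_zero 2 hε) hsq

theorem mapsTo_liftToBlowup (hε : ε ≠ 0) : MapsTo (liftToBlowup ε) cusp (blowup ε) := by
  rintro ⟨x, y⟩ hq
  by_cases hx : x = 0
  · simp only [liftToBlowup, if_pos hx]
    norm_num [blowup]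
  · simp only [liftToBlowup, if_neg hx]
    refine ⟨(div_sq_add_sub_half_sq_eq_quarter_iff hε).mpr ?_, by field_simp⟩
    simp only [cusp, mem_ofPred_eq] at hq
    rw [div_pow, div_eq_iff (pow_ne_zero 2 hx)]
    linear_combination ε ^ 2 * hq

theorem leftInvOn_liftToBlowup (hε : ε ≠ 0) :
    LeftInvOn (liftToBlowup ε) (fun p : ℝ × ℝ × ℝ => (p.1, p.2.1)) (blowup ε) := by
  rintro ⟨x, y, z⟩ hp
  by_cases hx : x = 0
  · subst hx
    obtain ⟨rfl, rfl⟩ := eq_zero_of_mem_blowup hε hp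
    simp [liftToBlowup]
  · have hz : ε * y / x = z := by
      rw [div_eq_iff hx]
      exact hp.2
    simp [liftToBlowup, hx, hz]

theorem rightInvOn_liftToBlowup :
    RightInvOn (liftToBlowup ε) (fun p : ℝ × ℝ × ℝ => (p.1, p.2.1)) cusp := by
  rintro ⟨x, y⟩ hq
  by_cases hx : x = 0
  · obtain rfl : y = 0 := snd_eq_zero_of_mem_cusp hq hx
    simp [liftToBlowup, hx]
  · simp [liftToBlowup, hx]

end

/-- For ε > 0, the projection (x,y,z) ↦ (x,y) maps the blown-up curve
S̃_ε = {(x,y,z) : (z/ε)² + (x-½)² = ¼ ∧ εy = zx} bijectively onto the cuspidal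
curve S = {(x,y) : y² = x³ - x⁴}, with inverse g given by
g(x,y) = (x, y, εy/x) for x ≠ 0 and g(0,0) = (0,0,0). -/
theorem stmt_7 (ε : ℝ) (hε : 0 < ε)
    (Stilde : Set (ℝ × ℝ × ℝ)) (S : Set (ℝ × ℝ))
    (hStilde : Stilde = {p : ℝ × ℝ × ℝ |
        (p.2.2 / ε) ^ 2 + (p.1 - 1 / 2) ^ 2 = 1 / 4 ∧ ε * p.2.1 = p.2.2 * p.1})
    (hS : S = {q : ℝ × ℝ | q.2 ^ 2 = q.1 ^ 3 - q.1 ^ 4})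
    (g : ℝ × ℝ → ℝ × ℝ × ℝ)
    (hg : ∀ x y : ℝ, g (x, y) = if x = 0 then ((0 : ℝ), (0 : ℝ), (0 : ℝ))
        else (x, y, ε * y / x)) :
    Set.BijOn (fun p : ℝ × ℝ × ℝ => (p.1, p.2.1)) Stilde S ∧
    Set.InvOn g (fun p : ℝ × ℝ × ℝ => (p.1, p.2.1)) Stilde S := by
  have hε : ε ≠ 0 := hε.ne'
  obtain rfl : g = liftToBlowup ε := funext fun ⟨x, y⟩ => hg x y
  obtain rfl : Stilde = blowup ε := hStilde
  obtain rfl : S = cusp := hS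
  have hinv : InvOn (liftToBlowup ε) (fun p : ℝ × ℝ × ℝ => (p.1, p.2.1)) (blowup ε) cusp :=
    ⟨leftInvOn_liftToBlowup hε, rightInvOn_liftToBlowup⟩
  exact ⟨hinv.bijOn (mapsTo_blowup_cusp hε) (mapsTo_liftToBlowup hε), hinv⟩
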